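/- arXiv:2601.00025 — 6 statements merged into one kernel-verified Lean document; each statement's English description precedes it below -/
import Mathlib

section
/- If ρ₁ and ρ₂ are faithful complex representations of finite abelian groups A and B respectively on the same finite-dimensional space, and there is a bijection γ : A → B such that ρ₂(γ(a)) is conjugate in GL(V) to ρ₁(a) for all a ∈ A (i.e. the representations are almost conjugate / Gassmann equivalent), then A and B are isomorphic. -/
/-! Conjugate matrices have the same order, so `γ` preserves orders (`ρ₁`, `ρ₂` being faithful)
and `A`, `B` have equally many solutions of `x ^ n = 1` for every `n`. In `∏ i, ℤ/q i` with prime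
powers `q i` this number is `∏ i, gcd (q i) n`, and passing from `n = P ^ k` to `P ^ (k + 1)`
multiplies it by `P` to the number of `q i` divisible by `P ^ (k + 1)`. These numbers determine
how often each prime power occurs among the `q i`, i.e. the isomorphism type. -/

open Finset

theorem Nat.gcd_prime_pow_succ {P : ℕ} (hP : P.Prime) (q k : ℕ) :
    q.gcd (P ^ (k + 1)) = q.gcd (P ^ k) * if P ^ (k + 1) ∣ q then P else 1 := by
  split_ifs with h
  · rw [Nat.gcd_eq_right h, Nat.gcd_eq_right ((pow_dvd_pow P k.le_succ).trans h), pow_succ]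
  · obtain ⟨j, hj, hg⟩ := (Nat.dvd_prime_pow hP).1 (Nat.gcd_dvd_right q (P ^ (k + 1)))
    have hjk : j ≤ k := by
      refine Nat.le_of_lt_succ (lt_of_le_of_ne hj fun hjk => h ?_)
      have := Nat.gcd_dvd_left q (P ^ (k + 1))
      rwa [hg, hjk] at this
    rw [mul_one]
    apply Nat.dvd_antisymm
    · exact Nat.dvd_gcd (Nat.gcd_dvd_left _ _) (by rw [hg]; exact pow_dvd_pow P hjk)
    · exact Nat.gcd_dvd_gcd_of_dvd_right _ (pow_dvd_pow P k.le_succ)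

theorem IsPrimePow.eq_prime_pow_succ_iff {q P k : ℕ} (hq : IsPrimePow q) (hP : P.Prime) :
    q = P ^ (k + 1) ↔ P ^ (k + 1) ∣ q ∧ ¬P ^ (k + 2) ∣ q := by
  obtain ⟨p, e, hp, -, rfl⟩ := (isPrimePow_nat_iff q).1 hq
  constructor
  · intro h
    rw [h, Nat.pow_dvd_pow_iff_le_right hP.one_lt, Nat.pow_dvd_pow_iff_le_right hP.one_lt]
    omega
  · rintro ⟨h1, h2⟩
    obtain rfl : P = p := (Nat.prime_dvd_prime_iff_eq hP hp).1
      (hP.dvd_of_dvd_pow ((dvd_pow_self P k.succ_ne_zero).trans h1))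
    rw [Nat.pow_dvd_pow_iff_le_right hP.one_lt] at h1 h2
    rw [show e = k + 1 by omega]

section PrimePowerFamilies

variable {ι κ : Type*} [Fintype ι] [Fintype κ]

theorem prod_gcd_prime_pow_succ (q : ι → ℕ) {P : ℕ} (hP : P.Prime) (k : ℕ) :
    ∏ i, (q i).gcd (P ^ (k + 1)) = (∏ i, (q i).gcd (P ^ k)) * P ^ #{i | P ^ (k + 1) ∣ q i} := by
  classical
  simp only [Nat.gcd_prime_pow_succ hP, prod_mul_distrib, prod_ite, prod_const, one_pow,
    mul_one]

theorem card_filter_prime_pow_dvd_eq {q : ι → ℕ} {r : κ → ℕ}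
    (h : ∀ n, ∏ i, (q i).gcd n = ∏ j, (r j).gcd n) {P : ℕ} (hP : P.Prime) (k : ℕ) :
    #{i | P ^ (k + 1) ∣ q i} = #{j | P ^ (k + 1) ∣ r j} := by
  have hk := h (P ^ (k + 1))
  rw [prod_gcd_prime_pow_succ q hP, prod_gcd_prime_pow_succ r hP, h (P ^ k)] at hk
  have hpos : 0 < ∏ j, (r j).gcd (P ^ k) :=
    prod_pos fun j _ => Nat.gcd_pos_of_pos_right _ (pow_pos hP.pos k)
  exact Nat.pow_right_injective hP.two_le (Nat.eq_of_mul_eq_mul_left hpos hk)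

theorem card_filter_eq_prime_pow_succ {q : ι → ℕ} (hq : ∀ i, IsPrimePow (q i)) {P : ℕ}
    (hP : P.Prime) (k : ℕ) :
    #{i | q i = P ^ (k + 1)} = #{i | P ^ (k + 1) ∣ q i} - #{i | P ^ (k + 2) ∣ q i} := by
  classical
  rw [← card_sdiff_of_subset (monotone_filter_right _ fun i _ (h : P ^ (k + 2) ∣ q i) =>
    (pow_dvd_pow P (k + 1).le_succ).trans h)]
  congr 1
  ext i
  simp [(hq i).eq_prime_pow_succ_iff hP]

theorem card_filter_eq_of_prod_gcd_eq {q : ι → ℕ} {r : κ → ℕ} (hq : ∀ i, IsPrimePow (q i))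
    (hr : ∀ j, IsPrimePow (r j)) (h : ∀ n, ∏ i, (q i).gcd n = ∏ j, (r j).gcd n) (v : ℕ) :
    #{i | q i = v} = #{j | r j = v} := by
  by_cases hv : IsPrimePow v
  · obtain ⟨P, k, hP, hk, rfl⟩ := (isPrimePow_nat_iff v).1 hv
    obtain ⟨k, rfl⟩ := Nat.exists_eq_add_one_of_ne_zero hk.ne'
    rw [card_filter_eq_prime_pow_succ hq hP, card_filter_eq_prime_pow_succ hr hP,
      card_filter_prime_pow_dvd_eq h hP, card_filter_prime_pow_dvd_eq h hP (k + 1)]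
  · have hq' : #{i | q i = v} = 0 := card_eq_zero.2 <| filter_eq_empty_iff.2 fun i _ hi =>
      hv (hi ▸ hq i)
    have hr' : #{j | r j = v} = 0 := card_eq_zero.2 <| filter_eq_empty_iff.2 fun j _ hj =>
      hv (hj ▸ hr j)
    rw [hq', hr']

theorem nonempty_addEquiv_pi_zmod_of_card_filter_eq (q : ι → ℕ) (r : κ → ℕ)
    (h : ∀ v, #{i | q i = v} = #{j | r j = v}) :
    Nonempty ((∀ i, ZMod (q i)) ≃+ ∀ j, ZMod (r j)) := by
  classical
  let σ : ι ≃ κ := Equiv.ofFiberEquiv (f := q) (g := r) fun v =>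
    Fintype.equivOfCardEq (by simpa only [Fintype.card_subtype] using h v)
  exact ⟨(AddEquiv.piCongrRight fun i =>
      (ZMod.ringEquivCongr (Equiv.ofFiberEquiv_map _ i).symm).toAddEquiv).trans
    (RingEquiv.piCongrLeft (fun j => ZMod (r j)) σ).toAddEquiv⟩

end PrimePowerFamilies

theorem ZMod.card_nsmul_eq_zero (m n : ℕ) [NeZero m] :
    Nat.card {x : ZMod m // n • x = 0} = m.gcd n := by
  have := IsAddCyclic.card_nsmulAddMonoidHom_ker (ZMod m) n
  rwa [Nat.card_zmod] at this

theorem Pi.card_nsmul_eq_zero {ι : Type*} [Fintype ι] (G : ι → Type*) [∀ i, AddMonoid (G i)]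
    (n : ℕ) : Nat.card {x : ∀ i, G i // n • x = 0} = ∏ i, Nat.card {y : G i // n • y = 0} := by
  rw [← Nat.card_pi]
  exact Nat.card_congr ((Equiv.subtypeEquivRight fun x => by simp [funext_iff]).trans
    Equiv.subtypePiEquivPi)

theorem AddEquiv.card_nsmul_eq_zero {G H : Type*} [AddMonoid G] [AddMonoid H] (e : G ≃+ H)
    (n : ℕ) : Nat.card {x : G // n • x = 0} = Nat.card {y : H // n • y = 0} :=
  Nat.card_congr (e.toEquiv.subtypeEquiv fun x => by simp [← map_nsmul])

theorem AddCommGroup.exists_addEquiv_pi_zmod_isPrimePow (G : Type*) [AddCommGroup G] [Finite G] :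
    ∃ (ι : Type) (_ : Fintype ι) (q : ι → ℕ),
      (∀ i, IsPrimePow (q i)) ∧ Nonempty (G ≃+ ∀ i, ZMod (q i)) := by
  classical
  obtain ⟨ι, _, p, hp, e, ⟨f⟩⟩ := AddCommGroup.equiv_directSum_zmod_of_finite G
  -- the factors with `e i = 0` are trivial and are split off
  let _ : Unique (∀ i : {i // ¬e i ≠ 0}, ZMod (p i ^ e i)) :=
    { default := 0
      uniq := fun x => funext fun i =>
        @Subsingleton.elim _ (ZMod.subsingleton_iff.2 (by simp [not_not.1 i.2])) _ _ }
  exact ⟨{i // e i ≠ 0}, inferInstance, fun i => p i ^ e i, fun i => (hp i).isPrimePow.pow i.2,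
    ⟨f.trans ((DirectSum.addEquivProd _).trans
      ((RingEquiv.piEquivPiSubtypeProd _ _).toAddEquiv.trans AddEquiv.prodUnique))⟩⟩

theorem AddCommGroup.nonempty_addEquiv_of_card_nsmul_eq_zero {G H : Type*} [AddCommGroup G]
    [Finite G] [AddCommGroup H] [Finite H]
    (h : ∀ n : ℕ, Nat.card {x : G // n • x = 0} = Nat.card {y : H // n • y = 0}) :
    Nonempty (G ≃+ H) := by
  obtain ⟨ι, _, q, hq, ⟨eG⟩⟩ := exists_addEquiv_pi_zmod_isPrimePow G
  obtain ⟨κ, _, r, hr, ⟨eH⟩⟩ := exists_addEquiv_pi_zmod_isPrimePow H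
  have _ (i : ι) : NeZero (q i) := ⟨(hq i).ne_zero⟩
  have _ (j : κ) : NeZero (r j) := ⟨(hr j).ne_zero⟩
  have hgcd (n : ℕ) : ∏ i, (q i).gcd n = ∏ j, (r j).gcd n := by
    simpa only [eG.card_nsmul_eq_zero, eH.card_nsmul_eq_zero, Pi.card_nsmul_eq_zero,
      ZMod.card_nsmul_eq_zero] using h n
  obtain ⟨e⟩ := nonempty_addEquiv_pi_zmod_of_card_filter_eq q r
    (card_filter_eq_of_prod_gcd_eq hq hr hgcd)
  exact ⟨(eG.trans e).trans eH.symm⟩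

theorem orderOf_eq_of_isConj {A B G : Type*} [Monoid A] [Monoid B] [Group G] {ρ₁ : A →* G}
    {ρ₂ : B →* G} (h₁ : Function.Injective ρ₁) (h₂ : Function.Injective ρ₂) {a : A} {b : B}
    (h : IsConj (ρ₁ a) (ρ₂ b)) : orderOf a = orderOf b := by
  obtain ⟨T, hT⟩ := isConj_iff.1 h
  rw [← orderOf_injective ρ₁ h₁, ← orderOf_injective ρ₂ h₂, ← hT, ← MulAut.conj_apply,
    MulEquiv.orderOf_eq]

theorem card_pow_eq_one_eq_of_orderOf_eq {A B : Type*} [Monoid A] [Monoid B] (γ : A ≃ B)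
    (hγ : ∀ a, orderOf (γ a) = orderOf a) (n : ℕ) :
    Nat.card {a : A // a ^ n = 1} = Nat.card {b : B // b ^ n = 1} :=
  Nat.card_congr (γ.subtypeEquiv fun a => by
    rw [← orderOf_dvd_iff_pow_eq_one, ← orderOf_dvd_iff_pow_eq_one, hγ])

theorem stmt7 {A B : Type*} [CommGroup A] [Fintype A] [CommGroup B] [Fintype B] {n : ℕ}
    (ρ₁ : A →* Matrix.GeneralLinearGroup (Fin n) ℂ)
    (ρ₂ : B →* Matrix.GeneralLinearGroup (Fin n) ℂ)
    (h₁ : Function.Injective ρ₁) (h₂ : Function.Injective ρ₂)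
    (γ : A ≃ B)
    (hγ : ∀ a : A, ∃ T : Matrix.GeneralLinearGroup (Fin n) ℂ,
        ρ₂ (γ a) = T * ρ₁ a * T⁻¹) :
    Nonempty (A ≃* B) := by
  have horder (a : A) : orderOf (γ a) = orderOf a :=
    (orderOf_eq_of_isConj h₁ h₂ (isConj_iff.2 ((hγ a).imp fun _ hT => hT.symm))).symm
  -- `{x : Additive A // n • x = 0}` is definitionally `{a : A // a ^ n = 1}`
  obtain ⟨e⟩ := AddCommGroup.nonempty_addEquiv_of_card_nsmul_eq_zero (G := Additive A)
    (H := Additive B) (card_pow_eq_one_eq_of_orderOf_eq (A := A) (B := B) γ horder)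
  exact ⟨MulEquiv.toAdditive.symm e⟩
end

section
/- Let ρ₁, ρ₂ be faithful complex representations of finite cyclic groups Γ₁ ≅ Γ₂ ≅ ⟨h⟩ on the same space V. If they are almost conjugate (i.e. there is a bijection γ with ρ₂(γ(g)) conjugate to ρ₁(g) for all g), then there exists an automorphism α of the cyclic group such that ρ₁ is equivalent to ρ₂ ∘ α (the representations are similar). -/
theorem stmt8 {Γ : Type*} [Group Γ] [Fintype Γ] [IsCyclic Γ] {n : ℕ}
    (ρ₁ ρ₂ : Γ →* Matrix.GeneralLinearGroup (Fin n) ℂ)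
    (h₁ : Function.Injective ρ₁) (h₂ : Function.Injective ρ₂)
    (γ : Γ ≃ Γ)
    (hγ : ∀ g : Γ, ∃ T : Matrix.GeneralLinearGroup (Fin n) ℂ,
        ρ₂ (γ g) = T * ρ₁ g * T⁻¹) :
    ∃ (α : Γ ≃* Γ) (T : Matrix.GeneralLinearGroup (Fin n) ℂ),
      ∀ g : Γ, ρ₂ (α g) = T * ρ₁ g * T⁻¹ := by
  obtain ⟨g₀, hg₀⟩ := IsCyclic.exists_generator (α := Γ)
  obtain ⟨T, hT⟩ := hγ g₀
  have hconj : ρ₂ (γ g₀) = (MulAut.conj T) (ρ₁ g₀) := by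
    simpa [MulAut.conj] using hT
  have hord : orderOf (γ g₀) = orderOf g₀ := by
    have h1 : orderOf (ρ₂ (γ g₀)) = orderOf (ρ₁ g₀) := by
      rw [hconj]
      exact orderOf_injective (MulAut.conj T).toMonoidHom
        (MulAut.conj T).injective _
    rwa [orderOf_injective ρ₂ h₂, orderOf_injective ρ₁ h₁] at h1
  have hcard : orderOf g₀ = Nat.card Γ :=
    orderOf_eq_card_of_forall_mem_zpowers hg₀
  obtain ⟨k, hk⟩ : γ g₀ ∈ Submonoid.powers g₀ := by
    rw [mem_powers_iff_mem_zpowers]; exact hg₀ _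
  have hcop : (Nat.card Γ).Coprime k := by
    have h2 : orderOf (g₀ ^ k) = orderOf g₀ := by rw [show g₀ ^ k = γ g₀ from hk, hord]
    rw [orderOf_pow] at h2
    have hpos : 0 < orderOf g₀ := orderOf_pos g₀
    have := (Nat.div_eq_self.mp h2).resolve_left (by omega)
    rwa [Nat.Coprime, ← hcard]
  letI : CommGroup Γ := IsCyclic.commGroup
  refine ⟨⟨powCoprime hcop, fun x y => mul_pow x y k⟩, T, fun g => ?_⟩
  obtain ⟨j, hj⟩ : g ∈ Submonoid.powers g₀ := by
    rw [mem_powers_iff_mem_zpowers]; exact hg₀ _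
  have hα : (powCoprime hcop) g = (γ g₀) ^ j := by
    show g ^ k = (γ g₀) ^ j
    rw [← hk, ← hj, ← pow_mul, ← pow_mul, Nat.mul_comm]
  show ρ₂ ((powCoprime hcop) g) = T * ρ₁ g * T⁻¹
  rw [hα, map_pow, hconj, ← map_pow, ← map_pow, ← hj]
  simp [MulAut.conj]
end

section
/- Let π : P → GL(V) be a faithful irreducible complex representation of a finite p-group P, let a ∈ 𝔷₂(P) \ 𝔷₁(P), x ∈ P with z = [x,a] ≠ 1 of order q in the center. Then the dimension n = dim V is divisible by q, and the character χ_π satisfies χ_π(aᵗ) = 0 and χ_π(xᵗ) = 0 for all integers t not divisible by q. -/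
/-!
Write `z = ⁅x, a⁆`. Since `a ∈ 𝔷₂(P)`, `z` is central, so by Schur's lemma `π z` is a scalar `u`,
and faithfulness gives `orderOf u = orderOf z`. Conjugation by `x` sends `aᵗ` to `zᵗ aᵗ`, and
conjugation by `a` sends `xᵗ` to `z⁻ᵗ xᵗ`. Comparing determinants gives `uⁿ = 1`, and comparing
traces gives `χ(aᵗ) = uᵗ χ(aᵗ)` and `χ(xᵗ) = u⁻ᵗ χ(xᵗ)`, so both vanish unless `uᵗ = 1`.
-/

/-- A matrix representation is irreducible if the only invariant subspaces are trivial. -/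
def IsIrreducibleRep {G : Type*} [Group G] {n : ℕ}
    (ρ : G →* Matrix.GeneralLinearGroup (Fin n) ℂ) : Prop :=
  ∀ W : Submodule ℂ (Fin n → ℂ),
    (∀ (g : G), ∀ v ∈ W, (ρ g : Matrix (Fin n) (Fin n) ℂ).mulVec v ∈ W) →
    W = ⊥ ∨ W = ⊤

open scoped commutatorElement

theorem commutatorElement_mem_center_of_mem_upperCentralSeries_two {G : Type*} [Group G] {a : G}
    (ha : a ∈ Subgroup.upperCentralSeries G 2) (x : G) : ⁅x, a⁆ ∈ Subgroup.center G := by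
  rw [← commutatorElement_inv, ← Subgroup.upperCentralSeries_one]
  exact inv_mem (Subgroup.mem_upperCentralSeries_succ_iff.mp ha x)

theorem conj_zpow_eq_commutatorElement_zpow_mul {G : Type*} [Group G] {y b : G}
    (h : Commute ⁅y, b⁆ b) (t : ℤ) : y * b ^ t * y⁻¹ = ⁅y, b⁆ ^ t * b ^ t := by
  rw [← conj_zpow, ← h.mul_zpow, commutatorElement_def, inv_mul_cancel_right]

namespace Matrix.GeneralLinearGroup

variable {n R : Type*} [DecidableEq n] [Fintype n]

theorem scalar_injective [Nonempty n] [Semiring R] :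
    Function.Injective (scalar n : Rˣ → GL n R) :=
  Units.map_injective fun _ _ h => Matrix.scalar_inj.mp h

theorem map_conj_zpow_eq_scalar_mul [Semiring R] {G : Type*} [Group G] (ρ : G →* GL n R)
    {y b : G} (hc : ⁅y, b⁆ ∈ Subgroup.center G) {u : Rˣ} (hu : ρ ⁅y, b⁆ = scalar n u) (t : ℤ) :
    ρ y * ρ (b ^ t) * (ρ y)⁻¹ = scalar n (u ^ t) * ρ (b ^ t) := by
  rw [← map_inv, ← map_mul, ← map_mul, conj_zpow_eq_commutatorElement_zpow_mul
    (Subgroup.mem_center_iff.mp hc b).symm, map_mul, map_zpow ρ ⁅y, b⁆, hu, ← map_zpow]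

variable [CommRing R]

theorem pow_card_eq_one_of_conj_eq_scalar_mul {Y B : GL n R} {u : Rˣ}
    (h : Y * B * Y⁻¹ = scalar n u * B) : u ^ Fintype.card n = 1 := by
  have hdet := congrArg det h
  rwa [map_mul, map_mul, map_inv, mul_inv_cancel_comm, map_mul, det_scalar, right_eq_mul] at hdet

theorem trace_eq_zero_of_conj_eq_scalar_mul [NoZeroDivisors R] {Y B : GL n R} {u : Rˣ}
    (h : Y * B * Y⁻¹ = scalar n u * B) (hu : u ≠ 1) : (B : Matrix n n R).trace = 0 := by
  have htr := congrArg (fun g : GL n R => (g : Matrix n n R).trace) h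
  simp only [Units.val_mul, trace_units_conj, coe_scalar, scalar_apply, ← smul_eq_diagonal_mul,
    trace_smul, smul_eq_mul] at htr
  exact (mul_left_eq_self₀.mp htr.symm).resolve_left (Units.val_eq_one.not.mpr hu)

end Matrix.GeneralLinearGroup

namespace IsIrreducibleRep

variable {G : Type*} [Group G] {n : ℕ} [NeZero n] {ρ : G →* Matrix.GeneralLinearGroup (Fin n) ℂ}

open Module.End in
theorem exists_eq_scalar_of_commute (hρ : IsIrreducibleRep ρ) {M : Matrix (Fin n) (Fin n) ℂ}
    (hM : ∀ g, Commute (ρ g : Matrix (Fin n) (Fin n) ℂ) M) :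
    ∃ c : ℂ, M = Matrix.scalar (Fin n) c := by
  obtain ⟨c, hc⟩ := exists_eigenvalue (Matrix.toLin' M)
  have hinv : ∀ g, ∀ v ∈ eigenspace (Matrix.toLin' M) c,
      (ρ g : Matrix (Fin n) (Fin n) ℂ).mulVec v ∈ eigenspace (Matrix.toLin' M) c := by
    intro g v hv
    rw [mem_eigenspace_iff, Matrix.toLin'_apply] at hv ⊢
    rw [Matrix.mulVec_mulVec, ← (hM g).eq, ← Matrix.mulVec_mulVec, hv, Matrix.mulVec_smul]
  have htop := (hρ _ hinv).resolve_left hc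
  refine ⟨c, Matrix.toLin'.injective (LinearMap.ext fun v => ?_)⟩
  have hv : v ∈ eigenspace (Matrix.toLin' M) c := htop ▸ Submodule.mem_top
  rw [mem_eigenspace_iff] at hv
  simp [hv, Matrix.toLin'_apply, Matrix.scalar_apply]

theorem exists_eq_scalar_of_mem_center (hρ : IsIrreducibleRep ρ) {z : G}
    (hz : z ∈ Subgroup.center G) : ∃ u : ℂˣ, ρ z = Matrix.GeneralLinearGroup.scalar (Fin n) u := by
  obtain ⟨c, hc⟩ := hρ.exists_eq_scalar_of_commute fun g =>
    (Commute.map (Subgroup.mem_center_iff.mp hz g) ρ).units_val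
  have hcenter : ρ z ∈ Subgroup.center (Matrix.GeneralLinearGroup (Fin n) ℂ) :=
    Matrix.GeneralLinearGroup.mem_center_iff_val_mem_range_scalar.mpr ⟨c, hc.symm⟩
  rw [Matrix.GeneralLinearGroup.center_eq_range_scalar] at hcenter
  obtain ⟨u, hu⟩ := hcenter
  exact ⟨u, hu.symm⟩

end IsIrreducibleRep

theorem stmt10_general {P : Type*} [Group P] {n : ℕ} (hn : 0 < n)
    (π : P →* Matrix.GeneralLinearGroup (Fin n) ℂ)
    (hfaith : Function.Injective π) (hirr : IsIrreducibleRep π)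
    (a : P) (ha : a ∈ upperCentralSeries P 2)
    (x : P) :
    orderOf ⁅x, a⁆ ∣ n ∧
    ∀ t : ℤ, ¬ ((orderOf ⁅x, a⁆ : ℤ) ∣ t) →
      Matrix.trace ((π (a ^ t) : Matrix (Fin n) (Fin n) ℂ)) = 0 ∧
      Matrix.trace ((π (x ^ t) : Matrix (Fin n) (Fin n) ℂ)) = 0 := by
  have : NeZero n := ⟨hn.ne'⟩
  have hcenter := commutatorElement_mem_center_of_mem_upperCentralSeries_two ha x
  obtain ⟨u, hu⟩ := hirr.exists_eq_scalar_of_mem_center hcenter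
  have horder : orderOf u = orderOf ⁅x, a⁆ := by
    rw [← orderOf_injective _ (Matrix.GeneralLinearGroup.scalar_injective (n := Fin n)) u, ← hu,
      orderOf_injective π hfaith]
  have hconj_a := Matrix.GeneralLinearGroup.map_conj_zpow_eq_scalar_mul π hcenter hu
  have hconj_x := Matrix.GeneralLinearGroup.map_conj_zpow_eq_scalar_mul π
    (commutatorElement_inv x a ▸ inv_mem hcenter) (u := u⁻¹)
    (by rw [← commutatorElement_inv, map_inv, hu, map_inv])
  refine ⟨?_, fun t ht => ⟨?_, ?_⟩⟩
  · simpa only [Fintype.card_fin, zpow_one, horder] using orderOf_dvd_of_pow_eq_one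
      (Matrix.GeneralLinearGroup.pow_card_eq_one_of_conj_eq_scalar_mul (hconj_a 1))
  · refine Matrix.GeneralLinearGroup.trace_eq_zero_of_conj_eq_scalar_mul (hconj_a t) ?_
    rwa [ne_eq, ← orderOf_dvd_iff_zpow_eq_one, horder]
  · refine Matrix.GeneralLinearGroup.trace_eq_zero_of_conj_eq_scalar_mul (hconj_x t) ?_
    rwa [ne_eq, ← orderOf_dvd_iff_zpow_eq_one, orderOf_inv, horder]

theorem stmt10 {p : ℕ} [Fact p.Prime] {P : Type*} [Group P] [Fintype P]
    (hP : IsPGroup p P) (hC : IsCyclic (Subgroup.center P)) {n : ℕ} (hn : 0 < n)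
    (π : P →* Matrix.GeneralLinearGroup (Fin n) ℂ)
    (hfaith : Function.Injective π) (hirr : IsIrreducibleRep π)
    (a : P) (ha : a ∈ upperCentralSeries P 2) (ha' : a ∉ upperCentralSeries P 1)
    (x : P) (hz : ⁅x, a⁆ ≠ 1) :
    orderOf ⁅x, a⁆ ∣ n ∧
    ∀ t : ℤ, ¬ ((orderOf ⁅x, a⁆ : ℤ) ∣ t) →
      Matrix.trace ((π (a ^ t) : Matrix (Fin n) (Fin n) ℂ)) = 0 ∧
      Matrix.trace ((π (x ^ t) : Matrix (Fin n) (Fin n) ℂ)) = 0 :=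
  stmt10_general hn π hfaith hirr a ha x
end

section
/- The character of a faithful irreducible complex representation of a finite nilpotent group of nilpotency class at most 2 vanishes identically outside the center of the group. -/
open scoped commutatorElement

theorem commutatorElement_mem_center {G : Type*} [Group G] (h2 : ∀ x y z : G, ⁅x, ⁅y, z⁆⁆ = 1)
    (g h : G) : ⁅g, h⁆ ∈ Subgroup.center G := by
  refine Subgroup.mem_center_iff.mpr fun x => ?_
  have := h2 x g h
  rwa [commutatorElement_def, mul_inv_eq_one, mul_inv_eq_iff_eq_mul] at this

open Matrix Module.End in
theorem IsIrreducibleRep.exists_eq_smul_one_of_commute {G : Type*} [Group G] {n : ℕ}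
    {ρ : G →* GL (Fin n) ℂ} (hρ : IsIrreducibleRep ρ) {A : Matrix (Fin n) (Fin n) ℂ}
    (hA : ∀ g, Commute A (ρ g)) : ∃ μ : ℂ, A = μ • 1 := by
  cases isEmpty_or_nonempty (Fin n)
  · exact ⟨0, Subsingleton.elim _ _⟩
  obtain ⟨μ, hμ⟩ := exists_eigenvalue (toLin' A)
  have hinv : ∀ g, ∀ v ∈ eigenspace (toLin' A) μ,
      (ρ g : Matrix (Fin n) (Fin n) ℂ) *ᵥ v ∈ eigenspace (toLin' A) μ := fun g =>
    mapsTo_genEigenspace_of_comm ((hA g).map toLinAlgEquiv') μ 1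
  have htop : eigenspace (toLin' A) μ = ⊤ := (hρ _ hinv).resolve_left hμ
  refine ⟨μ, toLin'.injective (LinearMap.ext fun v => ?_)⟩
  simpa using mem_eigenspace_iff.mp (htop ▸ Submodule.mem_top : v ∈ eigenspace (toLin' A) μ)

theorem Matrix.trace_eq_zero_of_conj_eq_smul {n K : Type*} [Fintype n] [DecidableEq n] [Field K]
    (P : GL n K) {B : Matrix n n K} {μ : K} (hμ : μ ≠ 1) (h : P * B * P⁻¹ = μ • B) :
    B.trace = 0 := by
  have htrace : B.trace = μ * B.trace := by
    rw [← smul_eq_mul, ← trace_smul, ← h, trace_mul_cycle, Units.inv_mul, one_mul]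
  have : (1 - μ) * B.trace = 0 := by linear_combination htrace
  exact (mul_eq_zero.mp this).resolve_left (sub_ne_zero.mpr hμ.symm)

theorem stmt11_general {Γ : Type*} [Group Γ] {n : ℕ}
    (h2 : ∀ x y z : Γ, ⁅x, ⁅y, z⁆⁆ = 1)
    (θ : Γ →* Matrix.GeneralLinearGroup (Fin n) ℂ)
    (hfaith : Function.Injective θ) (hirr : IsIrreducibleRep θ) :
    ∀ g : Γ, g ∉ Subgroup.center Γ →
      Matrix.trace (θ g : Matrix (Fin n) (Fin n) ℂ) = 0 := by
  intro g hg
  obtain ⟨h, hhg⟩ : ∃ h : Γ, ⁅h, g⁆ ≠ 1 := by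
    contrapose! hg
    exact Subgroup.mem_center_iff.mpr fun h => commutatorElement_eq_one_iff_mul_comm.mp (hg h)
  have hcentral := Subgroup.mem_center_iff.mp (commutatorElement_mem_center h2 h g)
  obtain ⟨μ, hμ⟩ := hirr.exists_eq_smul_one_of_commute (A := θ ⁅h, g⁆) fun x => by
    simp only [Commute, SemiconjBy, ← Units.val_mul, ← map_mul, hcentral x]
  have hμ1 : μ ≠ 1 := by
    rintro rfl
    exact hhg (hfaith (Units.ext (by simpa using hμ)))
  have hconj : h * g * h⁻¹ = ⁅h, g⁆ * g := by
    rw [commutatorElement_def]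
    group
  refine Matrix.trace_eq_zero_of_conj_eq_smul (θ h) hμ1 ?_
  calc (θ h : Matrix (Fin n) (Fin n) ℂ) * θ g * ↑(θ h)⁻¹ = θ (h * g * h⁻¹) := by simp
    _ = θ ⁅h, g⁆ * θ g := by rw [hconj, map_mul, Units.val_mul]
    _ = μ • θ g := by rw [hμ, smul_one_mul]

theorem stmt11 {Γ : Type*} [Group Γ] [Fintype Γ] {n : ℕ} (hn : 0 < n)
    (h2 : ∀ x y z : Γ, ⁅x, ⁅y, z⁆⁆ = 1)
    (θ : Γ →* Matrix.GeneralLinearGroup (Fin n) ℂ)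
    (hfaith : Function.Injective θ) (hirr : IsIrreducibleRep θ) :
    ∀ g : Γ, g ∉ Subgroup.center Γ →
      Matrix.trace (θ g : Matrix (Fin n) (Fin n) ℂ) = 0 :=
  stmt11_general h2 θ hfaith hirr
end

section
/- Let w = (w₁,…,w_p) ∈ (ℤ/p)^p, let A = (ℤ/p)^p, let Γ = A ⋊ C_p (with C_p acting by cyclic coordinate permutation), and let ρ_w be the representation of Γ induced from the linear character a ↦ exp(2πi⟨w,a⟩/p) of A. Then ρ_w is irreducible and faithful if and only if ∑ᵢ wᵢ ≠ 0 in ℤ/p. -/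
/-- The shift-by-`k` automorphism of `(ℤ/p)^p` (coordinates indexed by `ℤ/p`),
the action of `σ^k` where `σ` is the cycle `(1 2 … p)`. -/
def shiftAut (p : ℕ) (k : ZMod p) : (ZMod p → ZMod p) ≃+ (ZMod p → ZMod p) where
  toFun a := fun i => a (i + k)
  invFun a := fun i => a (i - k)
  left_inv a := by funext i; simp
  right_inv a := by funext i; simp
  map_add' a b := rfl

/-- The action of the cyclic group `C_p` on `A = (ℤ/p)^p` by cyclic coordinate
permutations, written multiplicatively. -/
def cycPerm (p : ℕ) :
    Multiplicative (ZMod p) →* MulAut (Multiplicative (ZMod p → ZMod p)) where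
  toFun k := AddEquiv.toMultiplicative (shiftAut p k.toAdd)
  map_one' := by
    ext x : 1
    show Multiplicative.ofAdd (fun i => x.toAdd (i + (0 : ZMod p))) = x
    simp
  map_mul' k l := by
    ext x : 1
    show Multiplicative.ofAdd (fun i => x.toAdd (i + (k.toAdd + l.toAdd)))
      = Multiplicative.ofAdd (fun i => x.toAdd (i + k.toAdd + l.toAdd))
    congr 1
    funext i
    rw [add_assoc]

/-- The linear character `a ↦ exp(2πi⟨w,a⟩/p)` of `A = (ℤ/p)^p`. -/
noncomputable def chiW (p : ℕ) [NeZero p] (w a : ZMod p → ZMod p) : ℂ :=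
  Complex.exp (2 * Real.pi * Complex.I * (((∑ i, w i * a i).val : ℕ) : ℂ) / p)

lemma chiW_key (p : ℕ) [NeZero p] (u v : ZMod p) :
    Complex.exp (2 * Real.pi * Complex.I * (((u + v).val : ℕ) : ℂ) / p)
      = Complex.exp (2 * Real.pi * Complex.I * ((u.val : ℕ) : ℂ) / p) *
        Complex.exp (2 * Real.pi * Complex.I * ((v.val : ℕ) : ℂ) / p) := by
  have hp : (p : ℂ) ≠ 0 := Nat.cast_ne_zero.mpr (NeZero.ne p)
  have hmod : (((u + v).val : ℕ) : ℂ) + p * (((u.val + v.val) / p : ℕ) : ℂ)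
      = ((u.val : ℕ) : ℂ) + ((v.val : ℕ) : ℂ) := by
    have h2 : ((u + v).val + p * ((u.val + v.val) / p) : ℕ) = u.val + v.val := by
      rw [ZMod.val_add]; exact Nat.mod_add_div _ _
    exact_mod_cast congrArg (fun n : ℕ => (n : ℂ)) h2
  rw [← Complex.exp_add, Complex.exp_eq_exp_iff_exists_int]
  refine ⟨-(((u.val + v.val) / p : ℕ) : ℤ), ?_⟩
  have hq' : (((u + v).val : ℕ) : ℂ)
      = ((u.val : ℕ) : ℂ) + ((v.val : ℕ) : ℂ) - p * (((u.val + v.val) / p : ℕ) : ℂ) := by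
    linear_combination hmod
  rw [hq', Int.cast_neg, Int.cast_natCast]
  field_simp
  ring

lemma chiW_add (p : ℕ) [NeZero p] (w a b : ZMod p → ZMod p) :
    chiW p w (a + b) = chiW p w a * chiW p w b := by
  unfold chiW
  have hsum : ∑ i, w i * (a + b) i = (∑ i, w i * a i) + (∑ i, w i * b i) := by
    simp [mul_add, Finset.sum_add_distrib]
  rw [hsum]
  exact chiW_key p _ _

/-- The representation of `Γ = A ⋊ C_p` induced from the linear character
`a ↦ exp(2πi⟨w,a⟩/p)` of `A`, written down explicitly in the basis indexed by
the coset representatives `σ^j` of `A` in `Γ`. -/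
noncomputable def rhoW (p : ℕ) [NeZero p] (w : ZMod p → ZMod p) :
    (Multiplicative (ZMod p → ZMod p) ⋊[cycPerm p] Multiplicative (ZMod p)) →*
      Matrix (ZMod p) (ZMod p) ℂ where
  toFun x := Matrix.of fun j i =>
    if i = j + Multiplicative.toAdd x.right
    then chiW p w (fun i' => Multiplicative.toAdd x.left (i' + j)) else 0
  map_one' := by
    ext j i
    by_cases h : i = j
    · subst h
      simp [Matrix.one_apply, chiW]
    · simp [Matrix.one_apply, h, Ne.symm h, chiW]
  map_mul' x y := by
    ext j i
    rw [Matrix.mul_apply]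
    simp only [Matrix.of_apply, SemidirectProduct.mul_right, SemidirectProduct.mul_left,
      toAdd_mul]
    rw [Finset.sum_eq_single (j + Multiplicative.toAdd x.right)]
    · rw [if_pos rfl]
      by_cases h : i = j + Multiplicative.toAdd x.right + Multiplicative.toAdd y.right
      · rw [if_pos (by rw [h, add_assoc]), if_pos h]
        have hleft : (fun i' => (Multiplicative.toAdd x.left
              + Multiplicative.toAdd ((cycPerm p) x.right y.left)) (i' + j))
            = (fun i' => Multiplicative.toAdd x.left (i' + j))
              + (fun i' => Multiplicative.toAdd y.left
                  (i' + (j + Multiplicative.toAdd x.right))) := by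
          funext i'
          show Multiplicative.toAdd x.left (i' + j)
              + Multiplicative.toAdd y.left (i' + j + Multiplicative.toAdd x.right) = _
          simp only [Pi.add_apply]
          rw [add_assoc]
        rw [hleft, chiW_add]
      · rw [if_neg (fun hc => h (hc.trans (add_assoc j _ _).symm)), if_neg h, mul_zero]
    · intro k _ hk
      rw [if_neg hk, zero_mul]
    · intro hmem
      exact absurd (Finset.mem_univ _) hmem

/-- Irreducibility of a matrix-valued representation: the only invariant
subspaces are trivial. -/
def IsIrredMat {G : Type*} [Group G] {p : ℕ} [NeZero p]
    (ρ : G →* Matrix (ZMod p) (ZMod p) ℂ) : Prop :=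
  ∀ W : Submodule ℂ (ZMod p → ℂ),
    (∀ g : G, ∀ v ∈ W, (ρ g).mulVec v ∈ W) → W = ⊥ ∨ W = ⊤

/-!
In the basis `e_j` (`j ∈ ℤ/p`) of coset representatives, `ρ_w(a, k)` is monomial: it sends
`e_{j+k}` to `ζ^{L_w(a)_j} e_j`, where `ζ = e^{2πi/p}` and `L_w(a)_j = ∑ᵢ wᵢ a_{i+j}`. As an
endomorphism of `(ℤ/p)^p`, `L_w = f(T)` for the cyclic shift `T` and `f = ∑ᵢ wᵢ Xⁱ`. Since
`(T - 1)^p = T^p - 1 = 0` in characteristic `p`, `f(T)` is `f(1) = ∑ᵢ wᵢ` plus a nilpotent, so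
`L_w` is bijective when `∑ᵢ wᵢ ≠ 0`. Then the kernel of `ρ_w` is trivial, and some `a ∈ A` acts
by `ζ` on a single basis vector and trivially on the others; together with the cyclic shifts this
forces a nonzero invariant subspace to be everything. When `∑ᵢ wᵢ = 0`, the constant vector
`(1, …, 1) ∈ A` acts trivially.
-/

open Polynomial

theorem isUnit_aeval_of_pow_char_eq_one {p : ℕ} [Fact p.Prime] {R : Type*} [Ring R]
    [Algebra (ZMod p) R] {t : R} (ht : t ^ p = 1) {f : (ZMod p)[X]} (hf : f.eval 1 ≠ 0) :
    IsUnit (aeval t f) := by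
  obtain ⟨g, hg⟩ := X_sub_C_dvd_sub_C_eval (p := f) (a := 1)
  have hf' : f = C (f.eval 1) + (X - C 1) * g := by rw [← hg]; ring
  -- `(X - 1) ^ p = X ^ p - 1` in characteristic `p`, and `t ^ p = 1`
  have hnil : IsNilpotent (aeval t ((X - C 1) * g)) := ⟨p, by
    rw [← map_pow, mul_pow, C_1, sub_pow_char, one_pow, map_mul, map_sub, map_pow, aeval_X,
      ht, map_one, sub_self, zero_mul]⟩
  rw [hf', map_add, aeval_C]
  exact hnil.isUnit_add_left_of_commute ((isUnit_iff_ne_zero.mpr hf).map _)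
    (Algebra.commute_algebraMap_right _ _)

def cycShift (p : ℕ) : Module.End (ZMod p) (ZMod p → ZMod p) :=
  LinearMap.funLeft (ZMod p) (ZMod p) (· + 1)

section

variable {p : ℕ}

theorem cycShift_pow_apply (n : ℕ) (a : ZMod p → ZMod p) (j : ZMod p) :
    (cycShift p ^ n) a j = a (j + n) := by
  induction n generalizing j with
  | zero => simp
  | succ n ih =>
    rw [pow_succ']
    change (cycShift p ^ n) a (j + 1) = _
    rw [ih]
    push_cast
    ring_nf

theorem cycShift_pow_self : cycShift p ^ p = 1 := by
  ext a j
  simp [cycShift_pow_apply]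

variable [NeZero p]

def pairingWithShifts (w : ZMod p → ZMod p) : Module.End (ZMod p) (ZMod p → ZMod p) :=
  ∑ i, w i • cycShift p ^ i.val

theorem pairingWithShifts_apply (w a : ZMod p → ZMod p) (j : ZMod p) :
    pairingWithShifts w a j = ∑ i, w i * a (i + j) := by
  simp [pairingWithShifts, cycShift_pow_apply, add_comm j]

theorem pairingWithShifts_bijective [Fact p.Prime] {w : ZMod p → ZMod p} (hw : ∑ i, w i ≠ 0) :
    Function.Bijective (pairingWithShifts w) := by
  rw [← Module.End.isUnit_iff]
  have h := isUnit_aeval_of_pow_char_eq_one cycShift_pow_self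
    (f := ∑ i, C (w i) * X ^ i.val) (by simpa [eval_finsetSum] using hw)
  simpa [pairingWithShifts, map_sum, Algebra.smul_def] using h

open SemidirectProduct

theorem stdAddChar_ne_zero (x : ZMod p) : ZMod.stdAddChar x ≠ 0 :=
  Circle.coe_ne_zero _

theorem stdAddChar_eq_one_iff {x : ZMod p} : ZMod.stdAddChar x = 1 ↔ x = 0 :=
  ZMod.injective_stdAddChar.eq_iff' (AddChar.map_zero_eq_one _)

theorem chiW_eq_stdAddChar (w a : ZMod p → ZMod p) :
    chiW p w a = ZMod.stdAddChar (∑ i, w i * a i) := by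
  rw [ZMod.stdAddChar_apply, ZMod.toCircle_apply]
  rfl

theorem rhoW_apply (w : ZMod p → ZMod p)
    (x : Multiplicative (ZMod p → ZMod p) ⋊[cycPerm p] Multiplicative (ZMod p)) (j i : ZMod p) :
    rhoW p w x j i = if i = j + x.right.toAdd
      then ZMod.stdAddChar (pairingWithShifts w x.left.toAdd j) else 0 := by
  simp only [rhoW, MonoidHom.coe_mk, OneHom.coe_mk, Matrix.of_apply, chiW_eq_stdAddChar,
    pairingWithShifts_apply]

theorem rhoW_mulVec (w : ZMod p → ZMod p)
    (x : Multiplicative (ZMod p → ZMod p) ⋊[cycPerm p] Multiplicative (ZMod p))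
    (v : ZMod p → ℂ) :
    (rhoW p w x).mulVec v = fun j =>
      ZMod.stdAddChar (pairingWithShifts w x.left.toAdd j) * v (j + x.right.toAdd) := by
  ext j
  simp [Matrix.mulVec, dotProduct, rhoW_apply]

theorem rhoW_inl_mulVec (w a : ZMod p → ZMod p) (v : ZMod p → ℂ) :
    (rhoW p w (inl (Multiplicative.ofAdd a))).mulVec v =
      fun j => ZMod.stdAddChar (pairingWithShifts w a j) * v j := by
  simp [rhoW_mulVec]

theorem rhoW_inr_mulVec (w : ZMod p → ZMod p) (k : ZMod p) (v : ZMod p → ℂ) :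
    (rhoW p w (inr (Multiplicative.ofAdd k))).mulVec v = fun j => v (j + k) := by
  simp [rhoW_mulVec]

theorem rhoW_inl_one_eq_one {w : ZMod p → ZMod p} (hw : ∑ i, w i = 0) :
    rhoW p w (inl (Multiplicative.ofAdd 1)) = 1 := by
  refine Matrix.ext_iff_mulVec.mpr fun v => ?_
  simp [rhoW_inl_mulVec, pairingWithShifts_apply, hw]

variable [Fact p.Prime]

theorem rhoW_injective {w : ZMod p → ZMod p} (hw : ∑ i, w i ≠ 0) :
    Function.Injective (rhoW p w) := by
  refine (injective_iff_map_eq_one _).mpr fun ⟨a, k⟩ hx => ?_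
  have hk : k.toAdd = 0 := by
    by_contra hk
    simpa [rhoW_apply, Matrix.one_apply, Ne.symm hk, stdAddChar_ne_zero]
      using congr_fun₂ hx 0 k.toAdd
  have ha : pairingWithShifts w a.toAdd = 0 := by
    ext j
    simpa [rhoW_apply, hk, stdAddChar_eq_one_iff] using congr_fun₂ hx j j
  exact SemidirectProduct.ext
    ((pairingWithShifts_bijective hw).1 (ha.trans (map_zero _).symm)) hk

theorem isIrredMat_rhoW {w : ZMod p → ZMod p} (hw : ∑ i, w i ≠ 0) : IsIrredMat (rhoW p w) := by
  intro W hW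
  refine or_iff_not_imp_left.mpr fun hbot => ?_
  obtain ⟨v, hvW, hv0⟩ := (Submodule.ne_bot_iff W).mp hbot
  obtain ⟨j₀, hj₀⟩ := Function.ne_iff.mp hv0
  -- `inl a` multiplies the `j₀`-th coordinate by `ζ = e^{2πi/p}` and fixes the others
  obtain ⟨a, ha⟩ := (pairingWithShifts_bijective hw).2 (Pi.single j₀ 1)
  have hζ : ZMod.stdAddChar (1 : ZMod p) - 1 ≠ 0 :=
    sub_ne_zero.mpr (stdAddChar_eq_one_iff.not.mpr one_ne_zero)
  have hdiag : (rhoW p w (inl (Multiplicative.ofAdd a))).mulVec v - v =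
      ((ZMod.stdAddChar (1 : ZMod p) - 1) * v j₀) • Pi.single j₀ 1 := by
    ext j
    by_cases hj : j = j₀
    · subst hj
      simp only [rhoW_inl_mulVec, ha, Pi.sub_apply, Pi.single_eq_same, Pi.smul_apply,
        smul_eq_mul, mul_one]
      ring
    · simp [rhoW_inl_mulVec, ha, hj]
  have hsingle : Pi.single j₀ 1 ∈ W := by
    have := W.smul_mem ((ZMod.stdAddChar (1 : ZMod p) - 1) * v j₀)⁻¹
      (W.sub_mem (hW (inl (Multiplicative.ofAdd a)) v hvW) hvW)
    rwa [hdiag, smul_smul, inv_mul_cancel₀ (mul_ne_zero hζ (by simpa using hj₀)), one_smul]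
      at this
  have hall : ∀ m, Pi.single m 1 ∈ W := by
    intro m
    have := hW (inr (Multiplicative.ofAdd (j₀ - m))) _ hsingle
    have hshift : (fun j => (Pi.single j₀ 1 : ZMod p → ℂ) (j + (j₀ - m))) = Pi.single m 1 := by
      ext j
      have hj : j + (j₀ - m) = j₀ ↔ j = m := ⟨fun h => by linear_combination h,
        fun h => by rw [h, add_sub_cancel]⟩
      simp only [Pi.single_apply, hj]
    rwa [rhoW_inr_mulVec, hshift] at this
  rw [eq_top_iff, ← (Pi.basisFun ℂ (ZMod p)).span_eq, Submodule.span_le]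
  rintro _ ⟨m, rfl⟩
  simpa using hall m

end

theorem stmt13_general (p : ℕ) [NeZero p] [Fact p.Prime] (w : ZMod p → ZMod p) :
    (Function.Injective (rhoW p w) ∧ IsIrredMat (rhoW p w)) ↔ (∑ i, w i) ≠ 0 := by
  refine ⟨fun ⟨hinj, _⟩ hw => ?_, fun hw => ⟨rhoW_injective hw, isIrredMat_rhoW hw⟩⟩
  have h := hinj ((rhoW_inl_one_eq_one hw).trans (map_one _).symm)
  rw [map_eq_one_iff _ SemidirectProduct.inl_injective] at h
  exact one_ne_zero (congr_fun h 0)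

theorem stmt13 (p : ℕ) [NeZero p] [Fact p.Prime] (hp2 : p ≠ 2) (w : ZMod p → ZMod p) :
    (Function.Injective (rhoW p w) ∧ IsIrredMat (rhoW p w)) ↔ (∑ i, w i) ≠ 0 :=
  stmt13_general p w
end

section
/- Let V be a finite-dimensional module over the group algebra kG of a finite group G, k a field. Then V is a projective kG-module if and only if there exists u ∈ End_k(V) such that ∑_{g∈G} ρ(g) ∘ u ∘ ρ(g)⁻¹ = Id_V, where ρ is the action of G on V. -/
/-!
Write `Tr u = ∑ g, g⁻¹ ∘ u ∘ g` for `k`-linear maps `u` between `k[G]`-modules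
(`LinearMap.sumOfConjugates`). Its values are `k[G]`-linear, and it commutes with composition
by `k[G]`-linear maps on either side. On `k[G]` the projection `a ↦ a(1) • 1` has trace `id`,
hence so does its coordinatewise extension `τ` to a free module, and so does `p ∘ τ ∘ s` on any
retract `M` of a free module. Conversely, if `Tr u = id` and `σ` is a `k`-linear section of the
surjection `p : (M →₀ k[G]) → M`, then `Tr (σ ∘ u)` is a `k[G]`-linear section of `p`, so `M` is
projective.
-/

open MonoidAlgebra

namespace LinearMap

variable {k G : Type*} [CommRing k] [Group G] [Fintype G]
  {U V W : Type*} [AddCommGroup U] [Module k U] [Module k[G] U] [IsScalarTower k k[G] U]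
  [AddCommGroup V] [Module k V] [Module k[G] V] [IsScalarTower k k[G] V]
  [AddCommGroup W] [Module k W] [Module k[G] W] [IsScalarTower k k[G] W]

theorem comp_sumOfConjugates (p : V →ₗ[k[G]] U) (π : W →ₗ[k] V) :
    p.restrictScalars k ∘ₗ π.sumOfConjugates G =
      (p.restrictScalars k ∘ₗ π).sumOfConjugates G := by
  ext w
  simp [sumOfConjugates_apply, conjugate_apply]

theorem sumOfConjugates_comp (π : W →ₗ[k] V) (s : U →ₗ[k[G]] W) :
    π.sumOfConjugates G ∘ₗ s.restrictScalars k =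
      (π ∘ₗ s.restrictScalars k).sumOfConjugates G := by
  ext w
  simp [sumOfConjugates_apply, conjugate_apply]

theorem sumOfConjugates_mapRange (ι : Type*) (π : W →ₗ[k] V) :
    (Finsupp.mapRange.linearMap (α := ι) π).sumOfConjugates G =
      Finsupp.mapRange.linearMap (π.sumOfConjugates G) := by
  ext i w : 2
  simp [sumOfConjugates_apply, conjugate_apply, Finsupp.single_finsetSum]

end LinearMap

section

open LinearMap

variable {k G : Type*} [CommRing k] [Group G] [Fintype G]

theorem MonoidAlgebra.sumOfConjugates_lsingle_one_comp_lapply_one :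
    (lsingle 1 ∘ₗ Finsupp.lapply 1 ∘ₗ (coeffLinearEquiv k).toLinearMap :
      k[G] →ₗ[k] k[G]).sumOfConjugates G = LinearMap.id := by
  ext g
  simp only [coe_comp, Function.comp_apply, lsingle_apply, sumOfConjugates_apply,
    conjugate_apply, smul_eq_mul, single_mul_single, mul_one, LinearEquiv.coe_coe,
    coeffLinearEquiv_apply, coeff_single, Finsupp.lapply_apply, one_mul, coeff_sum,
    Finsupp.coe_finsetSum, Finset.sum_apply, id_comp]
  rw [Finset.sum_eq_single g⁻¹ (fun c _ hc ↦ by simp [mul_eq_one_iff_eq_inv, hc]) (by simp)]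
  simp

theorem Finsupp.exists_sumOfConjugates_eq_id (ι : Type*) :
    ∃ τ : (ι →₀ k[G]) →ₗ[k] (ι →₀ k[G]), τ.sumOfConjugates G = LinearMap.id :=
  ⟨Finsupp.mapRange.linearMap
      (MonoidAlgebra.lsingle 1 ∘ₗ Finsupp.lapply 1 ∘ₗ (coeffLinearEquiv k).toLinearMap),
    by rw [sumOfConjugates_mapRange, sumOfConjugates_lsingle_one_comp_lapply_one,
      Finsupp.mapRange.linearMap_id]⟩

variable {M F : Type*} [AddCommGroup M] [Module k M] [Module k[G] M] [IsScalarTower k k[G] M]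
  [AddCommGroup F] [Module k F] [Module k[G] F] [IsScalarTower k k[G] F]

theorem exists_sumOfConjugates_eq_id_of_retract (s : M →ₗ[k[G]] F) (p : F →ₗ[k[G]] M)
    (hps : p ∘ₗ s = LinearMap.id) (τ : F →ₗ[k] F) (hτ : τ.sumOfConjugates G = LinearMap.id) :
    ∃ u : M →ₗ[k] M, u.sumOfConjugates G = LinearMap.id := by
  refine ⟨p.restrictScalars k ∘ₗ τ ∘ₗ s.restrictScalars k, ?_⟩
  rw [← comp_sumOfConjugates, ← sumOfConjugates_comp, hτ]
  exact congrArg (LinearMap.restrictScalars k) hps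

theorem Module.Projective.exists_sumOfConjugates_eq_id [Module.Projective k[G] M] :
    ∃ u : M →ₗ[k] M, u.sumOfConjugates G = LinearMap.id := by
  obtain ⟨s, hs⟩ := Module.projective_def'.mp ‹Module.Projective k[G] M›
  obtain ⟨τ, hτ⟩ := Finsupp.exists_sumOfConjugates_eq_id (k := k) (G := G) M
  exact exists_sumOfConjugates_eq_id_of_retract s _ hs τ hτ

theorem Module.Projective.of_sumOfConjugates_eq_id [Module.Projective k M] (u : M →ₗ[k] M)
    (hu : u.sumOfConjugates G = LinearMap.id) : Module.Projective k[G] M := by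
  let p := Finsupp.linearCombination k[G] (id : M → M)
  have hp : Function.Surjective p := fun x ↦ ⟨Finsupp.single x 1, by simp [p]⟩
  obtain ⟨σ, hσ⟩ := Module.projective_lifting_property (p.restrictScalars k) LinearMap.id hp
  refine .of_split ((σ ∘ₗ u).sumOfConjugatesEquivariant G) p
    (LinearMap.restrictScalars_injective k ?_)
  change p.restrictScalars k ∘ₗ (σ ∘ₗ u).sumOfConjugates G = LinearMap.id
  rw [comp_sumOfConjugates, ← LinearMap.comp_assoc, hσ, LinearMap.id_comp, hu]

end

theorem Module.projective_iff_exists_sumOfConjugates_eq_id {k G M : Type*} [Field k] [Group G]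
    [Fintype G] [AddCommGroup M] [Module k M] [Module k[G] M] [IsScalarTower k k[G] M] :
    Module.Projective k[G] M ↔ ∃ u : M →ₗ[k] M, u.sumOfConjugates G = LinearMap.id :=
  ⟨fun _ ↦ Module.Projective.exists_sumOfConjugates_eq_id,
    fun ⟨u, hu⟩ ↦ Module.Projective.of_sumOfConjugates_eq_id u hu⟩

theorem Representation.sumOfConjugates_conj_asModuleEquiv {k G V : Type*} [CommRing k]
    [Group G] [Fintype G] [AddCommGroup V] [Module k V] (ρ : Representation k G V)
    (u : V →ₗ[k] V) :
    (ρ.asModuleEquiv.symm.conj u).sumOfConjugates G =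
      ρ.asModuleEquiv.symm.conj (∑ g : G, ρ g ∘ₗ u ∘ₗ ρ g⁻¹) := by
  ext v
  simp only [LinearMap.sumOfConjugates_apply, LinearMap.conjugate_apply,
    Representation.single_smul, one_smul, LinearEquiv.conj_apply, LinearMap.comp_apply,
    LinearEquiv.coe_coe, LinearMap.sum_apply]
  exact Fintype.sum_equiv (Equiv.inv G) _ _ fun g ↦ by rw [Equiv.inv_apply, inv_inv]; rfl

theorem stmt15_general (k : Type*) [Field k] (G : Type*) [Group G] [Fintype G]
    (V : Type*) [AddCommGroup V] [Module k V]
    (ρ : Representation k G V) :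
    Module.Projective (MonoidAlgebra k G) ρ.asModule ↔
      ∃ u : V →ₗ[k] V, ∑ g : G, (ρ g) ∘ₗ u ∘ₗ (ρ g⁻¹) = LinearMap.id := by
  rw [Module.projective_iff_exists_sumOfConjugates_eq_id,
    ← ρ.asModuleEquiv.symm.conj.toEquiv.exists_congr_right]
  simp only [LinearEquiv.coe_toEquiv, Representation.sumOfConjugates_conj_asModuleEquiv,
    ← LinearEquiv.conj_id ρ.asModuleEquiv.symm, EmbeddingLike.apply_eq_iff_eq]

theorem stmt15 (k : Type*) [Field k] (G : Type*) [Group G] [Fintype G]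
    (V : Type*) [AddCommGroup V] [Module k V] [FiniteDimensional k V]
    (ρ : Representation k G V) :
    Module.Projective (MonoidAlgebra k G) ρ.asModule ↔
      ∃ u : V →ₗ[k] V, ∑ g : G, (ρ g) ∘ₗ u ∘ₗ (ρ g⁻¹) = LinearMap.id :=
  stmt15_general k G V ρ
end
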